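/- Every solution w : ℝ → ℝ of w'' + w(1-w²) = 0 with w(z) → ±1 as z → ±∞ and w' > 0 everywhere is of the form w(z) = tanh((z - z₀)/√2) for some z₀ ∈ ℝ. -/

import Mathlib

/-!
Multiplying the equation by `w'` shows that the energy `w'² / 2 - (1 - w²)² / 4` is conserved.
Since `w` converges at `+∞`, its derivative cannot converge to anything but `0`, so the energy
vanishes; with `w' > 0` and `|w| < 1` this leaves the first-order equation `w' = (1 - w²) / √2`.
Its right-hand side is Lipschitz on `[-1, 1]` and every translate of `tanh (· / √2)` solves it, so
uniqueness for ODEs identifies `w` with the translate that agrees with it at one point.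
-/

open Real Filter Topology Set

theorem Real.hasDerivAt_tanh (x : ℝ) : HasDerivAt tanh (1 - tanh x ^ 2) x := by
  have h := (hasDerivAt_sinh x).div (hasDerivAt_cosh x) (cosh_pos x).ne'
  rw [show tanh = fun y => sinh y / cosh y from funext tanh_eq_sinh_div_cosh]
  refine h.congr_deriv ?_
  field_simp

theorem hasDerivAt_tanh_sub_div (z₀ c z : ℝ) :
    HasDerivAt (fun z => tanh ((z - z₀) / c)) ((1 - tanh ((z - z₀) / c) ^ 2) / c) z := by
  have h := (hasDerivAt_tanh ((z - z₀) / c)).comp z (((hasDerivAt_id z).sub_const z₀).div_const c)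
  exact h.congr_deriv (by ring)

theorem eq_tanh_of_hasDerivAt {y : ℝ → ℝ} {z₀ z₁ c : ℝ}
    (hy : ∀ z, HasDerivAt y ((1 - y z ^ 2) / c) z) (hy_mem : ∀ z, y z ∈ Icc (-1) 1)
    (hz₁ : y z₁ = tanh ((z₁ - z₀) / c)) :
    y = fun z => tanh ((z - z₀) / c) := by
  obtain ⟨K, hK⟩ : ∃ K, LipschitzOnWith K (fun x : ℝ => (1 - x ^ 2) / c) (Icc (-1) 1) :=
    (by fun_prop : ContDiff ℝ 1 fun x : ℝ => (1 - x ^ 2) / c).contDiffOn.exists_lipschitzOnWith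
      one_ne_zero (convex_Icc _ _) isCompact_Icc
  refine ODE_solution_unique_univ (v := fun _ x => (1 - x ^ 2) / c) (s := fun _ => Icc (-1) 1)
    (fun _ => hK) (fun z => ⟨hy z, hy_mem z⟩) (fun z => ⟨hasDerivAt_tanh_sub_div z₀ c z, ?_⟩) hz₁
  exact ⟨(neg_one_lt_tanh _).le, (tanh_lt_one _).le⟩

theorem StrictMono.mem_Ioo_of_tendsto {α β : Type*} [LinearOrder α] [NoMinOrder α] [NoMaxOrder α]
    [TopologicalSpace β] [LinearOrder β] [OrderClosedTopology β] {f : α → β} {a b : β}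
    (hf : StrictMono f) (hbot : Tendsto f atBot (𝓝 a)) (htop : Tendsto f atTop (𝓝 b)) (x : α) :
    f x ∈ Ioo a b := by
  obtain ⟨x₁, hx₁⟩ := exists_lt x
  obtain ⟨x₂, hx₂⟩ := exists_gt x
  exact ⟨(hf.monotone.le_of_tendsto hbot x₁).trans_lt (hf hx₁),
    (hf hx₂).trans_le (hf.monotone.ge_of_tendsto htop x₂)⟩

theorem eq_zero_of_tendsto_deriv_of_tendsto {f : ℝ → ℝ} {a L : ℝ} (hf : Differentiable ℝ f)
    (hfa : Tendsto f atTop (𝓝 a)) (hf' : Tendsto (deriv f) atTop (𝓝 L)) : L = 0 := by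
  have hmvt (x : ℝ) : ∃ ξ ∈ Ioo x (x + 1), deriv f ξ = f (x + 1) - f x := by
    simpa using exists_deriv_eq_slope f (lt_add_one x) hf.continuous.continuousOn
      hf.differentiableOn
  choose ξ hξ hξf using hmvt
  have hξ_top : Tendsto ξ atTop atTop := tendsto_atTop_mono (fun x => (hξ x).1.le) tendsto_id
  have hdiff : Tendsto (fun x => f (x + 1) - f x) atTop (𝓝 (a - a)) :=
    (hfa.comp (tendsto_atTop_add_const_right _ 1 tendsto_id)).sub hfa
  refine tendsto_nhds_unique (hf'.comp hξ_top) ?_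
  simpa [Function.comp_def, hξf] using hdiff

noncomputable def energy (F w : ℝ → ℝ) (z : ℝ) : ℝ := deriv w z ^ 2 / 2 - F (w z)

theorem energy_eq_of_deriv_deriv_eq {F f w : ℝ → ℝ} (hF : ∀ x, HasDerivAt F (f x) x)
    (hw : Differentiable ℝ w) (hw' : Differentiable ℝ (deriv w))
    (heq : ∀ z, deriv (deriv w) z = f (w z)) (x y : ℝ) : energy F w x = energy F w y := by
  have hE (z : ℝ) : HasDerivAt (energy F w) 0 z := by
    have h := (((hw' z).hasDerivAt.pow 2).div_const 2).sub ((hF (w z)).comp z (hw z).hasDerivAt)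
    refine h.congr_deriv ?_
    rw [heq]
    ring
  exact is_const_of_deriv_eq_zero (fun z => (hE z).differentiableAt) (fun z => (hE z).deriv) x y

theorem deriv_sq_eq_of_allenCahn {w : ℝ → ℝ} (hsmooth : ContDiff ℝ 2 w)
    (heq : ∀ z, deriv (deriv w) z + w z * (1 - w z ^ 2) = 0)
    (htop : Tendsto w atTop (𝓝 1)) (hmono : ∀ z, 0 < deriv w z) (z : ℝ) :
    deriv w z ^ 2 = (1 - w z ^ 2) ^ 2 / 2 := by
  have hw : Differentiable ℝ w := hsmooth.differentiable two_ne_zero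
  obtain ⟨C, hC⟩ : ∃ C, ∀ z, deriv w z ^ 2 = 2 * C + (1 - w z ^ 2) ^ 2 / 2 := by
    let F : ℝ → ℝ := fun x => (1 - x ^ 2) ^ 2 / 4
    have hF (x : ℝ) : HasDerivAt F (-(x * (1 - x ^ 2))) x :=
      ((((hasDerivAt_pow 2 x).const_sub 1).pow 2).div_const 4).congr_deriv (by ring)
    refine ⟨energy F w 0, fun z => ?_⟩
    have h := energy_eq_of_deriv_deriv_eq hF hw hsmooth.differentiable_deriv_two
      (fun z => by linarith [heq z]) z 0
    simp only [energy, F] at h ⊢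
    linarith
  have hsq_top : Tendsto (fun z => deriv w z ^ 2) atTop (𝓝 (2 * C)) := by
    have hpot : Tendsto (fun z => (1 - w z ^ 2) ^ 2 / 2) atTop (𝓝 0) := by
      simpa using (((htop.pow 2).const_sub 1).pow 2).div_const 2
    simpa [hC] using hpot.const_add (2 * C)
  have hderiv_top : Tendsto (deriv w) atTop (𝓝 √(2 * C)) := by
    simpa [sqrt_sq (hmono _).le] using hsq_top.sqrt
  have hC_zero : 2 * C = 0 := by
    rw [eq_zero_of_tendsto_deriv_of_tendsto hw htop hderiv_top] at hderiv_top
    exact tendsto_nhds_unique hsq_top (by simpa using hderiv_top.pow 2)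
  rw [hC, hC_zero, zero_add]

/-- Every solution of `w'' + w(1-w²) = 0` on `ℝ` with `w(±∞) = ±1` and `w' > 0`
is a translate of the heteroclinic `z ↦ tanh(z/√2)`. -/
theorem heteroclinic_uniqueness (w : ℝ → ℝ)
    (hsmooth : ContDiff ℝ 2 w)
    (heq : ∀ z : ℝ, deriv (deriv w) z + w z * (1 - (w z) ^ 2) = 0)
    (htop : Filter.Tendsto w Filter.atTop (nhds 1))
    (hbot : Filter.Tendsto w Filter.atBot (nhds (-1)))
    (hmono : ∀ z : ℝ, 0 < deriv w z) :
    ∃ z₀ : ℝ, ∀ z : ℝ, w z = Real.tanh ((z - z₀) / Real.sqrt 2) := by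
  have hw_mem : ∀ z, w z ∈ Ioo (-1) 1 :=
    (strictMono_of_deriv_pos hmono).mem_Ioo_of_tendsto hbot htop
  have hfirst (z : ℝ) : HasDerivAt w ((1 - w z ^ 2) / √2) z := by
    obtain ⟨hlo, hhi⟩ := hw_mem z
    have hpos : 0 < 1 - w z ^ 2 := by nlinarith
    have hderiv : deriv w z = (1 - w z ^ 2) / √2 := by
      refine (pow_left_inj₀ (hmono z).le (by positivity) two_ne_zero).mp ?_
      rw [deriv_sq_eq_of_allenCahn hsmooth heq htop hmono, div_pow, sq_sqrt zero_le_two]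
    exact hderiv ▸ (hsmooth.differentiable two_ne_zero z).hasDerivAt
  obtain ⟨a, -, ha⟩ := tanh_surjOn (hw_mem 0)
  refine ⟨-(√2 * a), congrFun (eq_tanh_of_hasDerivAt (z₁ := 0) hfirst
    (fun z => Ioo_subset_Icc_self (hw_mem z)) ?_)⟩
  rw [← ha, zero_sub, neg_neg, mul_div_cancel_left₀ a (sqrt_ne_zero'.mpr two_pos)]
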